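/- arXiv:1408.1493 — 14 statements merged into one kernel-verified Lean document; each statement's English description precedes it below -/
import Mathlib

section
/- Let p, z ∈ ℂ with |z| = 1 and conj(p)·z ≠ 1, and set z' = (z − p)/(conj(p)·z − 1). Then the three points z, p, z' are collinear, i.e. Collinear ℝ ({z, p, z'} : Set ℂ), viewing ℂ as a real vector space. -/
/-!
On the unit circle `conj z = z⁻¹`, so `conj p * z - 1 = z * conj (p - z)`. Dividing `z - p` by this
and subtracting `z` leaves `t • (p - z)` with `t = -2 Re (conj z * (p - z)) / |p - z|²` real:
`f_p z` is the second intersection of the line through `z` and `p` with the unit circle.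
-/

open ComplexConjugate

namespace Complex

theorem conj_mul_sub_one_of_norm_eq_one {z : ℂ} (hz : ‖z‖ = 1) (p : ℂ) :
    conj p * z - 1 = z * conj (p - z) := by
  have hzz : z * conj z = 1 := by rw [mul_conj', hz]; simp
  rw [map_sub]
  linear_combination hzz

theorem reversion_eq_lineMap {p z : ℂ} (hz : ‖z‖ = 1) (hpz : p ≠ z) :
    (z - p) / (conj p * z - 1) =
      AffineMap.lineMap z p (-2 * (conj z * (p - z)).re / normSq (p - z)) := by
  have hzz : z * conj z = 1 := by rw [mul_conj', hz]; simp
  have hz0 : z ≠ 0 := by rintro rfl; simp at hz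
  have hw : conj (p - z) ≠ 0 := (map_ne_zero _).mpr (sub_ne_zero.mpr hpz)
  rw [conj_mul_sub_one_of_norm_eq_one hz, AffineMap.lineMap_apply_module', real_smul]
  push_cast
  rw [re_eq_add_conj, normSq_eq_conj_mul_self]
  field_simp
  simp only [map_sub, map_mul, conj_conj]
  linear_combination (p - z) * hzz

end Complex

/-- If `|z| = 1` and `conj p * z ≠ 1`, then `z`, `p` and the reversion image
`z' = (z - p)/(conj p * z - 1)` are collinear (viewing `ℂ` as a real vector space). -/
theorem reversion_image_collinear (p z : ℂ)
    (hz : ‖z‖ = 1) (hd : (starRingEnd ℂ) p * z ≠ 1) :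
    Collinear ℝ ({z, p, (z - p) / ((starRingEnd ℂ) p * z - 1)} : Set ℂ) := by
  have hpz : p ≠ z := by
    rintro rfl
    exact hd (by rw [Complex.conj_mul', hz]; simp)
  rw [Complex.reversion_eq_lineMap hz hpz]
  exact collinear_triple_of_mem_affineSpan_pair (left_mem_affineSpan_pair ℝ z p)
    (right_mem_affineSpan_pair ℝ z p) (AffineMap.lineMap_mem_affineSpan_pair _ z p)
end

section
/- Let p, z ∈ ℂ with |z| = 1 and conj(p)·z ≠ 1, and set z' = (z − p)/(conj(p)·z − 1). Then (z' − p)·(2·Re(conj(p)·z) − |p|² − 1) = (1 − |p|²)·(z − p). In particular z' − p is a real scalar multiple of z − p. -/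
/-!
Put `w = conj p * z`. Since `p * conj p = ‖p‖²`, one gets `f_p(z) - p = (1 - ‖p‖²) z / (w - 1)`,
and on the unit circle `z * conj (w - 1) = p - z`. Hence
`f_p(z) - p = (‖p‖² - 1) / ‖w - 1‖² • (z - p)`, and `‖w - 1‖² = 1 + ‖p‖² - 2 Re w` is the negative of
the factor `2 Re w - ‖p‖² - 1` in the identity.
-/

open Complex ComplexConjugate

noncomputable def reversion (p z : ℂ) : ℂ := (z - p) / (conj p * z - 1)

theorem reversion_sub_self {p z : ℂ} (hd : conj p * z ≠ 1) :
    reversion p z - p = ((1 - ‖p‖ ^ 2 : ℝ) : ℂ) * z / (conj p * z - 1) := by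
  rw [reversion, div_sub' (sub_ne_zero.mpr hd)]
  congr 1
  push_cast
  linear_combination -z * mul_conj' p

theorem mul_conj_conj_mul_sub_one {p z : ℂ} (hz : ‖z‖ = 1) :
    z * conj (conj p * z - 1) = p - z := by
  have hzz : z * conj z = 1 := by simp [mul_conj', hz]
  simp only [map_sub, map_mul, conj_conj, map_one]
  linear_combination p * hzz

theorem two_re_conj_mul_sub {p z : ℂ} (hz : ‖z‖ = 1) :
    2 * (conj p * z).re - ‖p‖ ^ 2 - 1 = -‖conj p * z - 1‖ ^ 2 := by
  rw [Complex.sq_norm (_ - 1), normSq_sub, normSq_mul, normSq_conj, normSq_eq_norm_sq z, hz,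
    normSq_eq_norm_sq]
  simp only [one_pow, mul_one, map_one]
  ring

theorem reversion_sub_self_eq_ofReal_mul {p z : ℂ} (hz : ‖z‖ = 1) (hd : conj p * z ≠ 1) :
    reversion p z - p = (((‖p‖ ^ 2 - 1) / ‖conj p * z - 1‖ ^ 2 : ℝ) : ℂ) * (z - p) := by
  rw [reversion_sub_self hd, div_eq_mul_inv, inv_def, ← Complex.sq_norm]
  push_cast
  linear_combination
    (1 - (‖p‖ : ℂ) ^ 2) / (‖conj p * z - 1‖ : ℂ) ^ 2 * mul_conj_conj_mul_sub_one (p := p) hz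

/-- Computational core of the collinearity of `z`, `p`, `z'`:
for `|z| = 1`, `conj p * z ≠ 1`, and `z' = (z - p)/(conj p * z - 1)` one has
`(z' - p) * (2 Re(conj p * z) - |p|² - 1) = (1 - |p|²) * (z - p)`;
in particular `z' - p` is a real scalar multiple of `z - p`. -/
theorem reversion_image_real_multiple (p z : ℂ)
    (hz : ‖z‖ = 1) (hd : (starRingEnd ℂ) p * z ≠ 1) :
    ((z - p) / ((starRingEnd ℂ) p * z - 1) - p) *
        ((2 * (((starRingEnd ℂ) p * z).re : ℝ) - ‖p‖ ^ 2 - 1 : ℝ) : ℂ)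
      = ((1 - ‖p‖ ^ 2 : ℝ) : ℂ) * (z - p) ∧
    ∃ t : ℝ, (z - p) / ((starRingEnd ℂ) p * z - 1) - p = (t : ℂ) * (z - p) := by
  have hreal := reversion_sub_self_eq_ofReal_mul hz hd
  refine ⟨?_, _, hreal⟩
  have hw : (‖conj p * z - 1‖ : ℂ) ≠ 0 := by simpa using sub_ne_zero.mpr hd
  rw [← reversion, hreal, two_re_conj_mul_sub hz]
  push_cast
  field_simp
  ring
end

section
/- Let p, q, r ∈ ℂ. The product M(r) * M(q) * M(p) of reversion matrices has trace zero if and only if the points p, q, r are collinear, i.e. (M(r) * M(q) * M(p)).trace = 0 ↔ Collinear ℝ ({p, q, r} : Set ℂ). Equivalently, Im(conj(q)·p + conj(r)·q + conj(p)·r) = 0 iff p, q, r are collinear. -/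
/-!
Multiplying out, `tr (M(r) M(q) M(p)) = S - conj S = 2 i Im S` with
`S = conj q * p + conj r * q + conj p * r`, and `-Im S = Im (conj (q - p) * (r - p))` is twice
the signed area of the triangle `p q r`. For `q ≠ p` it vanishes exactly when `(r - p) / (q - p)`
is real, i.e. when `r` lies on the line through `p` and `q`.
-/

open Matrix

/-- The reversion matrix `M(p) = !![1, -p; conj p, -1]`. -/
def M (p : ℂ) : Matrix (Fin 2) (Fin 2) ℂ := !![1, -p; (starRingEnd ℂ) p, -1]

open ComplexConjugate

namespace Complex

theorem im_conj_mul_eq_zero_iff_exists_smul {u : ℂ} (hu : u ≠ 0) (w : ℂ) :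
    (conj u * w).im = 0 ↔ ∃ t : ℝ, w = t • u := by
  constructor
  · intro h
    have hdiv : (w / u).im = 0 := by
      rw [div_im]
      simp only [mul_im, conj_re, conj_im] at h
      rw [div_sub_div_same, div_eq_zero_iff]
      exact Or.inl (by linarith)
    refine ⟨(w / u).re, ?_⟩
    have hreal : ((w / u).re : ℂ) = w / u := ext (by simp) (by simp [hdiv])
    rw [real_smul, hreal, div_mul_cancel₀ w hu]
  · rintro ⟨t, rfl⟩
    rw [real_smul, mul_left_comm, conj_mul']
    norm_cast

theorem collinear_iff_im_conj_sub_mul_sub (p q r : ℂ) :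
    Collinear ℝ ({p, q, r} : Set ℂ) ↔ (conj (q - p) * (r - p)).im = 0 := by
  rcases eq_or_ne q p with rfl | hqp
  · simp [collinear_pair]
  rw [im_conj_mul_eq_zero_iff_exists_smul (sub_ne_zero.2 hqp),
    collinear_iff_of_mem (Set.mem_insert p _)]
  constructor
  · rintro ⟨v, hv⟩
    obtain ⟨a, ha⟩ := hv q (by simp)
    obtain ⟨b, hb⟩ := hv r (by simp)
    have ha0 : a ≠ 0 := by rintro rfl; simp [ha] at hqp
    refine ⟨b / a, ?_⟩
    rw [ha, hb, vadd_eq_add, vadd_eq_add, add_sub_cancel_right, add_sub_cancel_right, smul_smul,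
      div_mul_cancel₀ b ha0]
  · rintro ⟨t, ht⟩
    refine ⟨q - p, ?_⟩
    simp only [Set.mem_insert_iff, Set.mem_singleton_iff, forall_eq_or_imp, forall_eq]
    exact ⟨⟨0, by simp⟩, ⟨1, by simp⟩, ⟨t, by rw [← ht]; simp⟩⟩

end Complex

theorem trace_M_mul_M_mul_M (p q r : ℂ) :
    (M r * M q * M p).trace =
      (conj q * p + conj r * q + conj p * r) - conj (conj q * p + conj r * q + conj p * r) := by
  rw [M, M, M, mul_fin_two, mul_fin_two, trace_fin_two_of]
  simp only [map_add, map_mul, Complex.conj_conj]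
  ring

/-- The product `M(r) * M(q) * M(p)` of reversion matrices is traceless if and only
if the points `p`, `q`, `r` are collinear; equivalently,
`Im(conj q * p + conj r * q + conj p * r) = 0` iff `p`, `q`, `r` are collinear. -/
theorem trace_eq_zero_iff_collinear (p q r : ℂ) :
    ((M r * M q * M p).trace = 0 ↔ Collinear ℝ ({p, q, r} : Set ℂ)) ∧
    (((starRingEnd ℂ) q * p + (starRingEnd ℂ) r * q + (starRingEnd ℂ) p * r).im = 0 ↔
      Collinear ℝ ({p, q, r} : Set ℂ)) := by
  set S := conj q * p + conj r * q + conj p * r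
  have hS : S.im = -(conj (q - p) * (r - p)).im := by
    simp only [S, map_sub, Complex.add_im, Complex.mul_im, Complex.sub_re, Complex.sub_im,
      Complex.conj_re, Complex.conj_im]
    ring
  have hcollinear : S.im = 0 ↔ Collinear ℝ ({p, q, r} : Set ℂ) := by
    rw [Complex.collinear_iff_im_conj_sub_mul_sub, hS, neg_eq_zero]
  refine ⟨?_, hcollinear⟩
  rw [trace_M_mul_M_mul_M, Complex.sub_conj]
  simpa only [mul_eq_zero, two_ne_zero, Complex.I_ne_zero, Complex.ofReal_eq_zero, false_or,
    or_false] using hcollinear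
end

section
/- Let p, q, r ∈ ℂ be collinear (Collinear ℝ ({p, q, r} : Set ℂ)), and set d = 1 − conj(p)·q − conj(q)·r + conj(p)·r. Assume d ≠ 0. Then d is real (d.im = 0), and with s = (p − q + r − p·conj(q)·r)/d one has the matrix identity M(r) * M(q) * M(p) = d • M(s). Hence the composition of the three reversions through p, q, r equals, up to the nonzero real scalar d, the reversion through the point s. -/
/-!
Composing the three reversion matrices gives `!![d, -s; conj s, -conj d]` for arbitrary
`p, q, r`, with `s = p - q + r - p * conj q * r`. Since `d` differs from
`(q - p) * conj (r - p)` by a real number, collinearity of `p, q, r` makes `d` real, and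
then this matrix is `d • M (s / d)`.
-/

open Matrix

open ComplexConjugate

theorem Complex.im_mul_conj_eq_zero_of_collinear {p q r : ℂ}
    (h : Collinear ℝ ({p, q, r} : Set ℂ)) : ((q - p) * conj (r - p)).im = 0 := by
  obtain ⟨v, hv⟩ := (collinear_iff_of_mem (Set.mem_insert p _)).mp h
  obtain ⟨a, rfl⟩ := hv q (by simp)
  obtain ⟨b, rfl⟩ := hv r (by simp)
  simp only [vadd_eq_add, add_sub_cancel_right, Complex.real_smul, map_mul,
    Complex.conj_ofReal]
  rw [mul_mul_mul_comm, Complex.mul_conj, ← Complex.ofReal_mul, ← Complex.ofReal_mul,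
    Complex.ofReal_im]

theorem M_mul_M_mul_M (p q r : ℂ) :
    M r * M q * M p =
      !![1 - conj p * q - conj q * r + conj p * r, -(p - q + r - p * conj q * r);
        conj (p - q + r - p * conj q * r), -conj (1 - conj p * q - conj q * r + conj p * r)] := by
  ext i j
  fin_cases i <;> fin_cases j <;> simp [M, Matrix.mul_apply, Fin.sum_univ_succ] <;> ring

theorem smul_M_div {d : ℂ} (hd : conj d = d) (hd0 : d ≠ 0) (s : ℂ) :
    d • M (s / d) = !![d, -s; conj s, -d] := by
  ext i j
  fin_cases i <;> fin_cases j <;> simp [M, map_div₀, hd] <;> field_simp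

/-- For collinear `p, q, r` with `d = 1 - conj p * q - conj q * r + conj p * r ≠ 0`,
the scalar `d` is real and `M(r) * M(q) * M(p) = d • M(s)` where
`s = (p - q + r - p * conj q * r)/d`: the composition of the three reversions is,
up to the nonzero real scalar `d`, the reversion through `s`. -/
theorem comp_three_reversions_eq_reversion (p q r : ℂ)
    (hcol : Collinear ℝ ({p, q, r} : Set ℂ))
    (d : ℂ)
    (hd : d = 1 - (starRingEnd ℂ) p * q - (starRingEnd ℂ) q * r + (starRingEnd ℂ) p * r)
    (hd0 : d ≠ 0) :
    d.im = 0 ∧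
    M r * M q * M p = d • M ((p - q + r - p * (starRingEnd ℂ) q * r) / d) := by
  have him : d.im = 0 := by
    have hdiff : d.im = ((q - p) * conj (r - p)).im := by
      subst hd
      simp only [Complex.sub_im, Complex.add_im, Complex.mul_im, Complex.conj_re,
        Complex.conj_im, Complex.one_im, Complex.sub_re]
      ring
    rw [hdiff, Complex.im_mul_conj_eq_zero_of_collinear hcol]
  have hreal : conj d = d := Complex.conj_eq_iff_im.mpr him
  refine ⟨him, ?_⟩
  rw [smul_M_div hreal hd0, M_mul_M_mul_M, ← hd, hreal]
end

section
/- Let p, q, r ∈ ℂ be collinear (Collinear ℝ ({p, q, r} : Set ℂ)), set d = 1 − conj(p)·q − conj(q)·r + conj(p)·r, assume d ≠ 0, and let s = (p − q + r − p·conj(q)·r)/d. Then s lies on the same line: Collinear ℝ ({p, q, r, s} : Set ℂ). -/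
/-!
Expanding shows `p - q + r - p * conj q * r = p * d + (1 - |p|²) * (r - q)` for all `p, q, r`,
so `s = p + ((1 - |p|²) / d) * (r - q)`. Moreover `Im d = -Im (conj (q - p) * (r - p))`, and the
latter vanishes for collinear points, so `d` is real and `s` lies on the line through `p`
parallel to `r - q`, which is the line `pqr`.
-/

open ComplexConjugate

theorem Collinear.insert_smul_vsub_vadd {k V P : Type*} [DivisionRing k] [AddCommGroup V]
    [Module k V] [AddTorsor V P] {p q r : P} (h : Collinear k ({p, q, r} : Set P)) (t : k) :
    Collinear k ({p, q, r, t • (r -ᵥ q) +ᵥ p} : Set P) := by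
  have hmem : t • (r -ᵥ q) +ᵥ p ∈ affineSpan k ({p, q, r} : Set P) := by
    refine AffineSubspace.vadd_mem_of_mem_direction ?_ (mem_affineSpan k (by simp))
    rw [direction_affineSpan]
    exact Submodule.smul_mem _ t (vsub_mem_vectorSpan k (by simp) (by simp))
  have hset : ({p, q, r, t • (r -ᵥ q) +ᵥ p} : Set P) = insert (t • (r -ᵥ q) +ᵥ p) {p, q, r} := by
    ext; simp only [Set.mem_insert_iff, Set.mem_singleton_iff]; tauto
  rw [hset, collinear_insert_iff_of_mem_affineSpan hmem]
  exact h

namespace Complex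

theorem im_conj_sub_mul_sub_eq_zero {p q r : ℂ} (h : Collinear ℝ ({p, q, r} : Set ℂ)) :
    (conj (q - p) * (r - p)).im = 0 := by
  obtain ⟨u, hu⟩ := (collinear_iff_of_mem (Set.mem_insert p _)).1 h
  obtain ⟨a, hq⟩ := hu q (by simp)
  obtain ⟨b, hr⟩ := hu r (by simp)
  rw [eq_vadd_iff_vsub_eq, vsub_eq_sub, real_smul] at hq hr
  rw [hq, hr, map_mul, conj_ofReal, mul_mul_mul_comm, mul_comm (conj u), mul_conj]
  norm_cast

theorem im_one_sub_conj_mul_sub_conj_mul_add_conj_mul (p q r : ℂ) :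
    (1 - conj p * q - conj q * r + conj p * r).im = -(conj (q - p) * (r - p)).im := by
  simp only [sub_im, add_im, one_im, mul_im, conj_re, conj_im, map_sub, sub_re]
  ring

theorem sub_add_sub_mul_conj_mul_eq (p q r : ℂ) :
    p - q + r - p * conj q * r =
      p * (1 - conj p * q - conj q * r + conj p * r) + (1 - normSq p) * (r - q) := by
  rw [normSq_eq_conj_mul_self]
  ring

end Complex

open Complex in
/-- For collinear `p, q, r` with `d = 1 - conj p * q - conj q * r + conj p * r ≠ 0`,
the point `s = (p - q + r - p * conj q * r)/d` lies on the same line: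
`p, q, r, s` are collinear. -/
theorem fourth_reversion_point_collinear (p q r : ℂ)
    (hcol : Collinear ℝ ({p, q, r} : Set ℂ))
    (d : ℂ)
    (hd : d = 1 - (starRingEnd ℂ) p * q - (starRingEnd ℂ) q * r + (starRingEnd ℂ) p * r)
    (hd0 : d ≠ 0) :
    Collinear ℝ ({p, q, r, (p - q + r - p * (starRingEnd ℂ) q * r) / d} : Set ℂ) := by
  have hd_real : (d.re : ℂ) = d := by
    refine ext rfl ?_
    rw [ofReal_im, hd, im_one_sub_conj_mul_sub_conj_mul_add_conj_mul,
      im_conj_sub_mul_sub_eq_zero hcol, neg_zero]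
  have hs : (p - q + r - p * conj q * r) / d = ((1 - normSq p) / d.re) • (r -ᵥ q) +ᵥ p := by
    rw [sub_add_sub_mul_conj_mul_eq, ← hd, real_smul, vsub_eq_sub, vadd_eq_add, ofReal_div,
      hd_real]
    field_simp
    push_cast
    ring
  rw [hs]
  exact hcol.insert_smul_vsub_vadd _
end

section
/- Let p, q, r ∈ ℂ be collinear, set d = 1 − conj(p)·q − conj(q)·r + conj(p)·r, assume d ≠ 0, and let s = (p − q + r − p·conj(q)·r)/d. Let x ∈ ℂ with |x| = 1, and define x₁ = (x − p)/(conj(p)·x − 1), x₂ = (x₁ − q)/(conj(q)·x₁ − 1), x₃ = (x₂ − r)/(conj(r)·x₂ − 1), assuming each of the three denominators conj(p)·x − 1, conj(q)·x₁ − 1, conj(r)·x₂ − 1 is nonzero and that conj(s)·x ≠ 1. Then x₃ = (x − s)/(conj(s)·x − 1). In particular the intersection point s of the line through x and x₃ with the line through p, q, r does not depend on x. -/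
/-!
The reversion through `p` is the linear fractional map of the matrix `!![1, -p; conj p, -1]`.
Multiplying three such matrices gives `!![d, -e; conj e, -conj d]` with
`e = p - q + r - p * conj q * r`, and collinearity of `p, q, r` says exactly that `d` is real.
The product is then `d • !![1, -s; conj s, -1]` with `s = e / d`, the matrix of the
reversion through `s`.
-/

open ComplexConjugate

section LinearFractional

variable {K : Type*} [Field K]

def mobius (M : Matrix (Fin 2) (Fin 2) K) (z : K) : K :=
  (M 0 0 * z + M 0 1) / (M 1 0 * z + M 1 1)

theorem mobius_mul (M N : Matrix (Fin 2) (Fin 2) K) {z : K} (hz : N 1 0 * z + N 1 1 ≠ 0) :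
    mobius (M * N) z = mobius M (mobius N z) := by
  simp only [mobius, Matrix.mul_apply, Fin.sum_univ_two]
  field_simp
  ring

theorem mobius_smul {c : K} (hc : c ≠ 0) (M : Matrix (Fin 2) (Fin 2) K) (z : K) :
    mobius (c • M) z = mobius M z := by
  simp only [mobius, Matrix.smul_apply, smul_eq_mul, mul_assoc, ← mul_add]
  exact mul_div_mul_left _ _ hc

end LinearFractional

def reversionMatrix (p : ℂ) : Matrix (Fin 2) (Fin 2) ℂ :=
  !![1, -p; conj p, -1]

theorem mobius_reversionMatrix (p z : ℂ) :
    mobius (reversionMatrix p) z = (z - p) / (conj p * z - 1) := by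
  simp [mobius, reversionMatrix, sub_eq_add_neg]

theorem mobius_mul_reversionMatrix (M : Matrix (Fin 2) (Fin 2) ℂ) {p z : ℂ}
    (hz : conj p * z - 1 ≠ 0) :
    mobius (M * reversionMatrix p) z = mobius M ((z - p) / (conj p * z - 1)) := by
  rw [mobius_mul _ _ (by simpa [reversionMatrix, sub_eq_add_neg] using hz),
    mobius_reversionMatrix]

theorem reversionMatrix_mul_mul (p q r : ℂ) :
    reversionMatrix r * reversionMatrix q * reversionMatrix p =
      !![1 - conj p * q - conj q * r + conj p * r, -(p - q + r - p * conj q * r);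
        conj (p - q + r - p * conj q * r), -conj (1 - conj p * q - conj q * r + conj p * r)] := by
  ext i j
  fin_cases i <;> fin_cases j <;>
    simp [reversionMatrix, Matrix.mul_apply, Fin.sum_univ_two] <;> ring

theorem smul_reversionMatrix {d : ℂ} (hd : conj d = d) (s : ℂ) :
    d • reversionMatrix s = !![d, -(s * d); conj (s * d), -conj d] := by
  ext i j
  fin_cases i <;> fin_cases j <;> simp [reversionMatrix, hd] <;> ring

theorem Collinear.sub_mul_conj_sub_eq {p q r : ℂ} (h : Collinear ℝ ({p, q, r} : Set ℂ)) :
    (q - p) * (conj r - conj p) = (conj q - conj p) * (r - p) := by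
  obtain ⟨v, hv⟩ := (collinear_iff_of_mem (Set.mem_insert p {q, r})).mp h
  obtain ⟨tq, hq⟩ := hv q (by simp)
  obtain ⟨tr, hr⟩ := hv r (by simp)
  have hq' : q - p = (tq : ℂ) * v := by rw [hq, vadd_eq_add, Complex.real_smul]; ring
  have hr' : r - p = (tr : ℂ) * v := by rw [hr, vadd_eq_add, Complex.real_smul]; ring
  rw [← map_sub, ← map_sub, hq', hr', map_mul, map_mul, Complex.conj_ofReal, Complex.conj_ofReal]
  ring

theorem comp_three_reversions_apply_general (p q r : ℂ)
    (hcol : Collinear ℝ ({p, q, r} : Set ℂ))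
    (d : ℂ)
    (hd : d = 1 - (starRingEnd ℂ) p * q - (starRingEnd ℂ) q * r + (starRingEnd ℂ) p * r)
    (hd0 : d ≠ 0)
    (s : ℂ) (hs : s = (p - q + r - p * (starRingEnd ℂ) q * r) / d)
    (x : ℂ)
    (x₁ x₂ x₃ : ℂ)
    (hx₁ : x₁ = (x - p) / ((starRingEnd ℂ) p * x - 1))
    (hx₂ : x₂ = (x₁ - q) / ((starRingEnd ℂ) q * x₁ - 1))
    (hx₃ : x₃ = (x₂ - r) / ((starRingEnd ℂ) r * x₂ - 1))
    (hden₁ : (starRingEnd ℂ) p * x - 1 ≠ 0)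
    (hden₂ : (starRingEnd ℂ) q * x₁ - 1 ≠ 0) :
    x₃ = (x - s) / ((starRingEnd ℂ) s * x - 1) := by
  have hreal : conj d = d := by
    rw [hd]
    simp only [map_sub, map_add, map_mul, map_one, Complex.conj_conj]
    linear_combination -hcol.sub_mul_conj_sub_eq
  have hsd : s * d = p - q + r - p * conj q * r := by rw [hs, div_mul_cancel₀ _ hd0]
  have hprod : reversionMatrix r * reversionMatrix q * reversionMatrix p =
      d • reversionMatrix s := by
    rw [smul_reversionMatrix hreal, reversionMatrix_mul_mul, ← hd, hsd]
  calc x₃ = mobius (reversionMatrix r * reversionMatrix q * reversionMatrix p) x := by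
        rw [mobius_mul_reversionMatrix _ hden₁, ← hx₁, mobius_mul_reversionMatrix _ hden₂, ← hx₂,
          mobius_reversionMatrix, hx₃]
    _ = (x - s) / (conj s * x - 1) := by
        rw [hprod, mobius_smul hd0, mobius_reversionMatrix]

/-- Paper's Theorem 2.2: for collinear `p, q, r` and
`s = (p - q + r - p * conj q * r)/d` with `d = 1 - conj p * q - conj q * r + conj p * r ≠ 0`,
the composition of the reversions through `p`, `q`, `r` applied to a point `x` of the
unit circle equals the reversion through `s` applied to `x`; in particular the
intersection point `s` of the line through `x` and `x₃` with the line through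
`p, q, r` does not depend on `x`. -/
theorem comp_three_reversions_apply (p q r : ℂ)
    (hcol : Collinear ℝ ({p, q, r} : Set ℂ))
    (d : ℂ)
    (hd : d = 1 - (starRingEnd ℂ) p * q - (starRingEnd ℂ) q * r + (starRingEnd ℂ) p * r)
    (hd0 : d ≠ 0)
    (s : ℂ) (hs : s = (p - q + r - p * (starRingEnd ℂ) q * r) / d)
    (x : ℂ) (hx : ‖x‖ = 1)
    (x₁ x₂ x₃ : ℂ)
    (hx₁ : x₁ = (x - p) / ((starRingEnd ℂ) p * x - 1))
    (hx₂ : x₂ = (x₁ - q) / ((starRingEnd ℂ) q * x₁ - 1))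
    (hx₃ : x₃ = (x₂ - r) / ((starRingEnd ℂ) r * x₂ - 1))
    (hden₁ : (starRingEnd ℂ) p * x - 1 ≠ 0)
    (hden₂ : (starRingEnd ℂ) q * x₁ - 1 ≠ 0)
    (hden₃ : (starRingEnd ℂ) r * x₂ - 1 ≠ 0)
    (hdens : (starRingEnd ℂ) s * x ≠ 1) :
    x₃ = (x - s) / ((starRingEnd ℂ) s * x - 1) :=
  comp_three_reversions_apply_general p q r hcol d hd hd0 s hs x x₁ x₂ x₃ hx₁ hx₂ hx₃ hden₁ hden₂
end

section
/- Let p, q, r, s ∈ ℂ be collinear (Collinear ℝ ({p, q, r, s} : Set ℂ)) with |p| ≠ 1, |q| ≠ 1, |r| ≠ 1, |s| ≠ 1, and let N = M(s) * M(r) * M(q) * M(p). Suppose there exists x ∈ ℂ with |x| = 1 such that x is NOT collinear with p, q, r, s (¬ Collinear ℝ ({p, q, r, s, x} : Set ℂ)), the denominator N 1 0 · x + N 1 1 is nonzero, and N 0 0 · x + N 0 1 = x · (N 1 0 · x + N 1 1) (i.e. the Möbius transformation of N fixes x). Then N is a nonzero scalar multiple of the identity matrix: there exists λ ∈ ℂ,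 λ ≠ 0, with N = λ • 1. Consequently the Möbius transformation of N fixes every point of the unit circle. -/
/-!
If `p, q, r, s` lie on the line `c + ℝ u`, each reversion matrix `M p, …, M s` anticommutes with
the matrix `lineMatrix c u`, so their product `N` commutes with it. The commutation relations
turn the fixed-point equation at `x` into `N₀₁ · (conj u · x² - a · x - u) = 0`, where
`a = conj u · c - u · conj c`, and on the unit circle this quadratic vanishes only on the line.
Hence `N₀₁ = 0`, and then the relations force `N₁₀ = 0` and `N₀₀ = N₁₁`.
-/

open Matrix

open ComplexConjugate

theorem commute_mul_of_anticommute {R : Type*} [Semigroup R] [HasDistribNeg R] {a b t : R}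
    (ha : a * t = -(t * a)) (hb : b * t = -(t * b)) : Commute (a * b) t := by
  rw [Commute, SemiconjBy, mul_assoc, hb, mul_neg, ← mul_assoc, ha, neg_mul, neg_neg, mul_assoc]

theorem exists_direction_of_not_collinear_insert {k V : Type*} [DivisionRing k] [AddCommGroup V]
    [Module k V] {s : Set V} {p x : V} (hp : p ∈ s) (hs : Collinear k s)
    (hx : ¬ Collinear k (insert x s)) :
    ∃ v ≠ 0, (∀ z ∈ s, ∃ t : k, z = t • v + p) ∧ ∀ t : k, x ≠ t • v + p := by
  obtain ⟨v, hv⟩ := (collinear_iff_of_mem hp).1 hs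
  refine ⟨v, ?_, hv, ?_⟩
  · rintro rfl
    refine hx ((collinear_pair k x p).subset (Set.insert_subset_insert fun z hz => ?_))
    simpa using hv z hz
  · rintro t rfl
    refine hx ((collinear_iff_of_mem (Set.mem_insert_of_mem _ hp)).2 ⟨v, ?_⟩)
    rintro z (rfl | hz)
    exacts [⟨t, rfl⟩, hv z hz]

/-- `M z` anticommutes with `lineMatrix c u` exactly when `z` lies on the line `c + ℝ u`. -/
def lineMatrix (c u : ℂ) : Matrix (Fin 2) (Fin 2) ℂ :=
  !![conj u * c - u * conj c, 2 * u; 2 * conj u, -(conj u * c - u * conj c)]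

theorem M_mul_lineMatrix (c u : ℂ) (t : ℝ) :
    M (t • u + c) * lineMatrix c u = -(lineMatrix c u * M (t • u + c)) := by
  ext i j
  fin_cases i <;> fin_cases j <;>
    simp [M, lineMatrix, Matrix.mul_apply, Fin.sum_univ_two, Complex.real_smul] <;> ring

theorem lineMatrix_commute_entries {N : Matrix (Fin 2) (Fin 2) ℂ} {c u : ℂ}
    (h : Commute N (lineMatrix c u)) :
    N 0 1 * conj u = u * N 1 0 ∧ u * (N 0 0 - N 1 1) = (conj u * c - u * conj c) * N 0 1 := by
  have h00 := congrFun (congrFun h.eq 0) 0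
  have h01 := congrFun (congrFun h.eq 0) 1
  simp only [lineMatrix, neg_sub, Fin.isValue, Matrix.mul_apply, of_apply, cons_val', cons_val_zero,
    cons_val_fin_one, Fin.sum_univ_two, cons_val_one] at h00 h01
  exact ⟨by linear_combination h00 / 2, by linear_combination h01 / 2⟩

theorem exists_eq_smul_add_of_norm_eq_one {c u x : ℂ} (hu : u ≠ 0) (hx : ‖x‖ = 1)
    (h : conj u * x ^ 2 - (conj u * c - u * conj c) * x - u = 0) :
    ∃ t : ℝ, x = t • u + c := by
  have hxx : x * conj x = 1 := by
    rw [Complex.mul_conj, Complex.normSq_eq_norm_sq, hx]; norm_num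
  have hreal : conj (conj u * (x - c)) = conj u * (x - c) := by
    simp only [map_mul, map_sub, Complex.conj_conj]
    linear_combination (conj u * x - conj u * c + u * conj c) * hxx - conj x * h
  obtain ⟨r, hr⟩ := Complex.conj_eq_iff_real.1 hreal
  refine ⟨r / Complex.normSq u, ?_⟩
  have hnorm : (Complex.normSq u : ℂ) = u * conj u := (Complex.mul_conj u).symm
  have hnorm0 : (Complex.normSq u : ℂ) ≠ 0 := by exact_mod_cast Complex.normSq_pos.2 hu |>.ne'
  rw [Complex.real_smul, Complex.ofReal_div, div_mul_eq_mul_div, eq_comm, ← eq_sub_iff_add_eq,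
    div_eq_iff hnorm0, hnorm]
  linear_combination -u * hr

theorem eq_smul_one_of_commute_lineMatrix {N : Matrix (Fin 2) (Fin 2) ℂ} {c u x : ℂ}
    (hu : u ≠ 0) (hcomm : Commute N (lineMatrix c u)) (hx : ‖x‖ = 1)
    (hxL : ∀ t : ℝ, x ≠ t • u + c) (hfix : N 0 0 * x + N 0 1 = x * (N 1 0 * x + N 1 1)) :
    ∃ l : ℂ, N = l • 1 := by
  obtain ⟨h10, hdiag⟩ := lineMatrix_commute_entries hcomm
  have h01 : N 0 1 = 0 := by
    by_contra h01
    obtain ⟨t, ht⟩ := exists_eq_smul_add_of_norm_eq_one (c := c) hu hx <| by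
      refine (mul_eq_zero.1 ?_).resolve_left h01
      linear_combination x ^ 2 * h10 + x * hdiag - u * hfix
    exact hxL t ht
  have h10 : N 1 0 = 0 := by
    simpa [h01, hu] using h10.symm
  have h00 : N 0 0 = N 1 1 := by
    simpa [h01, hu, sub_eq_zero] using hdiag
  refine ⟨N 1 1, ?_⟩
  ext i j
  fin_cases i <;> fin_cases j <;> simp [h01, h10, h00]

theorem porism_cyclic_quadrilaterals_general (p q r s : ℂ)
    (hcol : Collinear ℝ ({p, q, r, s} : Set ℂ))
    (N : Matrix (Fin 2) (Fin 2) ℂ)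
    (hN : N = M s * M r * M q * M p)
    (x : ℂ) (hx : ‖x‖ = 1)
    (hxcol : ¬ Collinear ℝ ({p, q, r, s, x} : Set ℂ))
    (hden : N 1 0 * x + N 1 1 ≠ 0)
    (hfix : N 0 0 * x + N 0 1 = x * (N 1 0 * x + N 1 1)) :
    (∃ l : ℂ, l ≠ 0 ∧ N = l • (1 : Matrix (Fin 2) (Fin 2) ℂ)) ∧
    ∀ z : ℂ, ‖z‖ = 1 → N 0 0 * z + N 0 1 = z * (N 1 0 * z + N 1 1) := by
  have hinsert : ({p, q, r, s, x} : Set ℂ) = insert x {p, q, r, s} := by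
    ext; simp only [Set.mem_insert_iff, Set.mem_singleton_iff]; tauto
  obtain ⟨v, hv, hline, hxline⟩ := exists_direction_of_not_collinear_insert (p := p) (by simp) hcol
    (hinsert ▸ hxcol)
  have hanti : ∀ z ∈ ({p, q, r, s} : Set ℂ), M z * lineMatrix p v = -(lineMatrix p v * M z) := by
    intro z hz
    obtain ⟨t, rfl⟩ := hline z hz
    exact M_mul_lineMatrix p v t
  have hcomm : Commute N (lineMatrix p v) := by
    rw [hN, mul_assoc (M s * M r)]
    exact (commute_mul_of_anticommute (hanti s (by simp)) (hanti r (by simp))).mul_left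
      (commute_mul_of_anticommute (hanti q (by simp)) (hanti p (by simp)))
  obtain ⟨l, rfl⟩ := eq_smul_one_of_commute_lineMatrix hv hcomm hx hxline hfix
  exact ⟨⟨l, by simpa using hden, rfl⟩, fun z _ => by simp [mul_comm]⟩

/-- Porism on cyclic quadrilaterals (paper's Theorem 2.1): let `p, q, r, s` be
collinear points none of which lies on the unit circle, and let
`N = M(s) * M(r) * M(q) * M(p)`.  If the Möbius transformation of `N` fixes some
point `x` of the unit circle that is not collinear with `p, q, r, s` (and the
denominator at `x` does not vanish), then `N` is a nonzero scalar multiple of the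
identity matrix, and consequently the Möbius transformation of `N` fixes every
point of the unit circle. -/
theorem porism_cyclic_quadrilaterals (p q r s : ℂ)
    (hcol : Collinear ℝ ({p, q, r, s} : Set ℂ))
    (hp : ‖p‖ ≠ 1) (hq : ‖q‖ ≠ 1)
    (hr : ‖r‖ ≠ 1) (hs : ‖s‖ ≠ 1)
    (N : Matrix (Fin 2) (Fin 2) ℂ)
    (hN : N = M s * M r * M q * M p)
    (x : ℂ) (hx : ‖x‖ = 1)
    (hxcol : ¬ Collinear ℝ ({p, q, r, s, x} : Set ℂ))
    (hden : N 1 0 * x + N 1 1 ≠ 0)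
    (hfix : N 0 0 * x + N 0 1 = x * (N 1 0 * x + N 1 1)) :
    (∃ l : ℂ, l ≠ 0 ∧ N = l • (1 : Matrix (Fin 2) (Fin 2) ℂ)) ∧
    ∀ z : ℂ, ‖z‖ = 1 → N 0 0 * z + N 0 1 = z * (N 1 0 * z + N 1 1) :=
  porism_cyclic_quadrilaterals_general p q r s hcol N hN x hx hxcol hden hfix
end

section
/- Let l : List ℂ be a list of odd length whose members all lie on one line, i.e. Collinear ℝ ({z : ℂ | z ∈ l} : Set ℂ). Then the product of the corresponding reversion matrices is traceless: ((l.map M).prod).trace = 0. -/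
open Matrix

/-!
Parametrise the line as `p₀ + r v` with `r` real. Then `M (p₀ + r v) = M p₀ + r Q` for a fixed
traceless `Q`, so every factor lies in `span ℂ {M p₀, Q}`. For traceless `2 × 2` matrices `P, Q`
the squares `P²`, `Q²` and the anticommutator `PQ + QP` are scalars, so `span {P, Q}` is the odd
part of a Clifford algebra: a product of three of its elements lies in it again. Hence an odd
product lies in `span {P, Q}` and is traceless.
-/

namespace Submodule

theorem list_prod_mem_of_odd_length {R A : Type*} [CommSemiring R] [Semiring A] [Algebra R A]
    {N : Submodule R A} (hN : N * N * N ≤ N) :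
    ∀ {l : List A}, Odd l.length → (∀ x ∈ l, x ∈ N) → l.prod ∈ N
  | [], hodd, _ => absurd hodd (by simp)
  | [a], _, hl => by simpa using hl a
  | a :: b :: l, hodd, hl => by
    have hl' : Odd l.length := by simpa [Nat.odd_add_one, parity_simps] using hodd
    have hprod := list_prod_mem_of_odd_length hN hl' fun x hx => hl x (by simp [hx])
    rw [List.prod_cons, List.prod_cons, ← mul_assoc]
    exact hN (mul_mem_mul (mul_mem_mul (hl a (by simp)) (hl b (by simp))) hprod)

variable {R A : Type*} [CommRing R] [Ring A] [Algebra R A] {P Q : A}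

theorem span_pair_mul_span_pair_le (hP : P * P ∈ (1 : Submodule R A))
    (hQ : Q * Q ∈ (1 : Submodule R A)) (hPQ : P * Q + Q * P ∈ (1 : Submodule R A)) :
    span R {P, Q} * span R {P, Q} ≤ span R {1, P * Q} := by
  have hone : (1 : Submodule R A) ≤ span R {1, P * Q} := one_le.2 (subset_span (by simp))
  have hPQ' : P * Q ∈ span R {1, P * Q} := subset_span (by simp)
  have hQP : Q * P = (P * Q + Q * P) - P * Q := by abel
  rw [span_mul_span, span_le, Set.mul_subset_iff]
  simp only [Set.forall_mem_insert, Set.mem_singleton_iff, forall_eq, SetLike.mem_coe]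
  exact ⟨⟨hone hP, hPQ'⟩, hQP ▸ sub_mem (hone hPQ) hPQ', hone hQ⟩

theorem span_one_mul_mul_span_pair_le (hP : P * P ∈ (1 : Submodule R A))
    (hQ : Q * Q ∈ (1 : Submodule R A)) (hPQ : P * Q + Q * P ∈ (1 : Submodule R A)) :
    span R {1, P * Q} * span R {P, Q} ≤ span R {P, Q} := by
  have hP' : P ∈ span R {P, Q} := subset_span (by simp)
  have hQ' : Q ∈ span R {P, Q} := subset_span (by simp)
  have hmulP {x : A} (hx : x ∈ (1 : Submodule R A)) : P * x ∈ span R {P, Q} := by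
    obtain ⟨c, rfl⟩ := mem_one.1 hx
    simpa [← Algebra.commutes, ← Algebra.smul_def] using smul_mem _ c hP'
  rw [span_mul_span, span_le, Set.mul_subset_iff]
  simp only [Set.forall_mem_insert, Set.mem_singleton_iff, forall_eq, SetLike.mem_coe]
  refine ⟨⟨by simpa using hP', by simpa using hQ'⟩, ?_, by simpa [mul_assoc] using hmulP hQ⟩
  obtain ⟨c, hc⟩ := mem_one.1 hP
  have hPQP : P * Q * P = P * (P * Q + Q * P) - c • Q := by
    rw [Algebra.smul_def, hc]; noncomm_ring
  exact hPQP ▸ sub_mem (hmulP hPQ) (smul_mem _ c hQ')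

theorem span_pair_mul_span_pair_mul_span_pair_le (hP : P * P ∈ (1 : Submodule R A))
    (hQ : Q * Q ∈ (1 : Submodule R A)) (hPQ : P * Q + Q * P ∈ (1 : Submodule R A)) :
    span R {P, Q} * span R {P, Q} * span R {P, Q} ≤ span R {P, Q} :=
  (mul_le_mul_left (span_pair_mul_span_pair_le hP hQ hPQ) _).trans
    (span_one_mul_mul_span_pair_le hP hQ hPQ)

end Submodule

namespace Matrix

variable {R : Type*} [CommRing R] {A B : Matrix (Fin 2) (Fin 2) R}

theorem mul_self_eq_algebraMap_of_trace_eq_zero (hA : A.trace = 0) :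
    A * A = algebraMap R _ (-A.det) := by
  rw [trace_fin_two, add_eq_zero_iff_eq_neg'] at hA
  rw [eta_fin_two A, hA]
  ext i j
  fin_cases i <;> fin_cases j <;> simp [det_fin_two, algebraMap_matrix_apply] <;> ring

theorem mul_add_mul_eq_algebraMap_of_trace_eq_zero (hA : A.trace = 0) (hB : B.trace = 0) :
    A * B + B * A = algebraMap R _ (A * B).trace := by
  rw [trace_fin_two, add_eq_zero_iff_eq_neg'] at hA hB
  rw [eta_fin_two A, eta_fin_two B, hA, hB]
  ext i j
  fin_cases i <;> fin_cases j <;> simp [trace_fin_two, algebraMap_matrix_apply] <;> ring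

theorem span_pair_mul_span_pair_mul_span_pair_le_of_trace_eq_zero (hA : A.trace = 0)
    (hB : B.trace = 0) :
    Submodule.span R {A, B} * Submodule.span R {A, B} * Submodule.span R {A, B} ≤
      Submodule.span R {A, B} := by
  refine Submodule.span_pair_mul_span_pair_mul_span_pair_le ?_ ?_ ?_
  · exact mul_self_eq_algebraMap_of_trace_eq_zero hA ▸ Submodule.algebraMap_mem _
  · exact mul_self_eq_algebraMap_of_trace_eq_zero hB ▸ Submodule.algebraMap_mem _
  · exact mul_add_mul_eq_algebraMap_of_trace_eq_zero hA hB ▸ Submodule.algebraMap_mem _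

theorem trace_list_prod_eq_zero_of_odd_length (hA : A.trace = 0) (hB : B.trace = 0)
    {l : List (Matrix (Fin 2) (Fin 2) R)} (hodd : Odd l.length)
    (hl : ∀ X ∈ l, X ∈ Submodule.span R {A, B}) : l.prod.trace = 0 := by
  have hprod := Submodule.list_prod_mem_of_odd_length (N := Submodule.span R {A, B})
    (span_pair_mul_span_pair_mul_span_pair_le_of_trace_eq_zero hA hB) hodd hl
  obtain ⟨a, b, hab⟩ := Submodule.mem_span_pair.1 hprod
  simp [← hab, hA, hB]

end Matrix

theorem trace_M (p : ℂ) : (M p).trace = 0 := by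
  simp [M, trace_fin_two]

theorem M_real_smul_add (r : ℝ) (v p : ℂ) :
    M (r • v + p) = M p + (r : ℂ) • !![0, -v; (starRingEnd ℂ) v, 0] := by
  ext i j
  fin_cases i <;> fin_cases j <;> simp [M, Complex.real_smul]; ring

/-- The product of an odd number of reversion matrices through collinear points is
traceless, i.e. is (up to scalar) again a reversion matrix. -/
theorem odd_product_of_reversions_traceless (l : List ℂ)
    (hodd : Odd l.length)
    (hcol : Collinear ℝ ({z : ℂ | z ∈ l} : Set ℂ)) :
    ((l.map M).prod).trace = 0 := by
  obtain ⟨p₀, v, hline⟩ := (collinear_iff_exists_forall_eq_smul_vadd _).1 hcol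
  set Q : Matrix (Fin 2) (Fin 2) ℂ := !![0, -v; (starRingEnd ℂ) v, 0]
  have hQ : Q.trace = 0 := by simp [Q, trace_fin_two]
  refine trace_list_prod_eq_zero_of_odd_length (trace_M p₀) hQ (by simpa using hodd) ?_
  simp only [List.mem_map, forall_exists_index, and_imp, forall_apply_eq_imp_iff₂]
  intro p hp
  obtain ⟨r, rfl⟩ := hline p hp
  exact Submodule.mem_span_pair.2 ⟨1, r, by rw [vadd_eq_add, M_real_smul_add, one_smul]⟩
end

section
/- Let l : List ℂ be a list of even length whose members all lie on one line (Collinear ℝ ({z : ℂ | z ∈ l} : Set ℂ)) and satisfy |z| ≠ 1 for every z ∈ l. Let N = (l.map M).prod. Suppose there exists x ∈ ℂ with |x| = 1 such that ¬ Collinear ℝ (({z : ℂ | z ∈ l} ∪ {x}) : Set ℂ), the denominator N 1 0 · x + N 1 1 is nonzero, and N 0 0 · x + N 0 1 = x · (N 1 0 · x + N 1 1). Then there exists λ ∈ ℂ, λ ≠ 0, with N = λ • 1; hence the Möbius transformation of N fixes every point of the unit circle. -/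
/-!
Write the line through the points of `l` as `p + z₁ z₂ p̄ = z₁ + z₂`, where `z₁, z₂` are its
intersections with the unit circle (or, if it misses the circle, the two points inverse in the
circle and symmetric in the line). This equation says exactly that the reversion through `p`
swaps `(z₁, 1)` and `(z₂, 1)` up to scalars `κ₁, κ₂` with `κ₁ κ₂ = -det M(p)`. An even product `N`
therefore has eigenvectors `(z₁, 1)`, `(z₂, 1)` with eigenvalues `K₁, K₂`, `K₁ K₂ = det N ≠ 0`,
and the fixed point `x` gives a third eigenvector `(x, 1)`, with eigenvalue `μ`. As `|x| = 1` and
`x` is off the line, `x ≠ z₁, z₂`, so `det N = μ K₂` forces `μ = K₁`, and `N` acts as `μ` on the independent vectors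
`(x, 1)` and `(z₁, 1)`. Tracking the determinant is what covers a tangent line, where `z₁ = z₂`.
-/

open Matrix

open ComplexConjugate

open Polynomial in
theorem IsAlgClosed.exists_add_eq_mul_eq {K : Type*} [Field K] [IsAlgClosed K] (a b : K) :
    ∃ z₁ z₂ : K, z₁ + z₂ = a ∧ z₁ * z₂ = b := by
  obtain ⟨z, hz⟩ := IsAlgClosed.exists_root (C 1 * X ^ 2 + C (-a) * X + C b)
    (by rw [degree_quadratic one_ne_zero]; decide)
  refine ⟨z, a - z, by ring, ?_⟩
  simp only [IsRoot, eval_add, eval_mul, eval_C, eval_pow, eval_X] at hz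
  linear_combination -hz

namespace Matrix

section FinTwo

variable {K : Type*} [Field K] {A : Matrix (Fin 2) (Fin 2) K}

theorem mulVec_vecCons_one_eq_smul_iff {a α : K} :
    A *ᵥ ![a, 1] = α • ![a, 1] ↔ A 0 0 * a + A 0 1 = α * a ∧ A 1 0 * a + A 1 1 = α := by
  simp [funext_iff, Fin.forall_fin_two]

theorem mul_eq_mul_diagonal_of_mulVec_eq_smul {a b α β : K} (ha : A *ᵥ ![a, 1] = α • ![a, 1])
    (hb : A *ᵥ ![b, 1] = β • ![b, 1]) :
    A * !![a, b; 1, 1] = !![a, b; 1, 1] * diagonal ![α, β] := by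
  obtain ⟨ha₀, ha₁⟩ := mulVec_vecCons_one_eq_smul_iff.1 ha
  obtain ⟨hb₀, hb₁⟩ := mulVec_vecCons_one_eq_smul_iff.1 hb
  ext i j
  fin_cases i <;> fin_cases j <;> simp [mul_apply] <;> grind

theorem det_eq_mul_of_mulVec_eq_smul {a b α β : K} (hab : a ≠ b)
    (ha : A *ᵥ ![a, 1] = α • ![a, 1]) (hb : A *ᵥ ![b, 1] = β • ![b, 1]) :
    A.det = α * β := by
  have h := congrArg det (mul_eq_mul_diagonal_of_mulVec_eq_smul ha hb)
  simp only [det_mul, det_fin_two_of, det_diagonal, Fin.prod_univ_two] at h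
  exact mul_right_cancel₀ (sub_ne_zero.2 hab) (by simpa [mul_comm] using h)

theorem eq_smul_one_of_mulVec_eq_smul {a b α : K} (hab : a ≠ b)
    (ha : A *ᵥ ![a, 1] = α • ![a, 1]) (hb : A *ᵥ ![b, 1] = α • ![b, 1]) :
    A = α • 1 := by
  have hP : IsUnit !![a, b; 1, 1] := by
    simpa [isUnit_iff_isUnit_det, det_fin_two_of, sub_eq_zero] using hab
  refine hP.mul_right_cancel ?_
  rw [mul_eq_mul_diagonal_of_mulVec_eq_smul ha hb]
  ext i j
  fin_cases i <;> fin_cases j <;> simp [mul_comm]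

end FinTwo

section SwapsAndFixes

variable {n R : Type*} [Fintype n] [DecidableEq n] [CommRing R] (v w : n → R)

/-- The determinant clause is automatic when `v` and `w` are independent; it keeps the information
that is lost when `v = w`. -/
def SwapsUpToScalar (A : Matrix n n R) : Prop :=
  ∃ a b : R, A *ᵥ v = a • w ∧ A *ᵥ w = b • v ∧ A.det = -(a * b)

def FixesUpToScalar (A : Matrix n n R) : Prop :=
  ∃ a b : R, A *ᵥ v = a • v ∧ A *ᵥ w = b • w ∧ A.det = a * b

variable {v w}

theorem fixesUpToScalar_one : FixesUpToScalar v w 1 :=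
  ⟨1, 1, by simp, by simp, by simp⟩

theorem FixesUpToScalar.mul {A B : Matrix n n R} (hA : FixesUpToScalar v w A)
    (hB : FixesUpToScalar v w B) : FixesUpToScalar v w (A * B) := by
  obtain ⟨a, a', hAv, hAw, hA⟩ := hA
  obtain ⟨b, b', hBv, hBw, hB⟩ := hB
  refine ⟨a * b, a' * b', ?_, ?_, ?_⟩
  · rw [← mulVec_mulVec, hBv, mulVec_smul, hAv, smul_smul, mul_comm]
  · rw [← mulVec_mulVec, hBw, mulVec_smul, hAw, smul_smul, mul_comm]
  · rw [det_mul, hA, hB]; ring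

theorem SwapsUpToScalar.mul {A B : Matrix n n R} (hA : SwapsUpToScalar v w A)
    (hB : SwapsUpToScalar v w B) : FixesUpToScalar v w (A * B) := by
  obtain ⟨a, a', hAv, hAw, hA⟩ := hA
  obtain ⟨b, b', hBv, hBw, hB⟩ := hB
  refine ⟨a' * b, a * b', ?_, ?_, ?_⟩
  · rw [← mulVec_mulVec, hBv, mulVec_smul, hAw, smul_smul, mul_comm]
  · rw [← mulVec_mulVec, hBw, mulVec_smul, hAv, smul_smul, mul_comm]
  · rw [det_mul, hA, hB]; ring

theorem fixesUpToScalar_prod_of_even : ∀ l : List (Matrix n n R), Even l.length →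
    (∀ A ∈ l, SwapsUpToScalar v w A) → FixesUpToScalar v w l.prod
  | [], _, _ => fixesUpToScalar_one
  | [_], heven, _ => by simp at heven
  | A :: B :: l, heven, hswap => by
    rw [List.prod_cons, List.prod_cons, ← mul_assoc]
    refine (SwapsUpToScalar.mul (hswap A (by simp)) (hswap B (by simp))).mul
      (fixesUpToScalar_prod_of_even l ?_ fun C hC => hswap C (by simp [hC]))
    simpa [Nat.even_add_one] using heven

end SwapsAndFixes

end Matrix

theorem M_mulVec_of_add_mul_conj_eq {p z₁ z₂ : ℂ} (hp : p + z₁ * z₂ * conj p = z₁ + z₂) :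
    M p *ᵥ ![z₁, 1] = (conj p * z₁ - 1) • ![z₂, 1] := by
  ext i
  fin_cases i
  · simp [M]; linear_combination -hp
  · simp [M]; ring

theorem det_M (p : ℂ) : (M p).det = p * conj p - 1 := by
  simp [M, det_fin_two_of]; ring

theorem isUnit_M {p : ℂ} (hp : ‖p‖ ≠ 1) : IsUnit (M p) := by
  rw [isUnit_iff_isUnit_det, det_M, isUnit_iff_ne_zero, sub_ne_zero, Complex.mul_conj,
    Complex.normSq_eq_norm_sq]
  exact_mod_cast (pow_eq_one_iff_of_nonneg (norm_nonneg p) two_ne_zero).not.2 hp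

theorem ne_of_norm_eq_one_of_add_mul_conj_ne {x z₁ z₂ : ℂ} (hx : ‖x‖ = 1)
    (hx' : x + z₁ * z₂ * conj x ≠ z₁ + z₂) : x ≠ z₁ := by
  rintro rfl
  have : x * conj x = 1 := by simp [Complex.mul_conj, Complex.normSq_eq_norm_sq, hx]
  exact hx' (by linear_combination z₂ * this)

theorem Collinear.exists_add_mul_conj_eq {S : Set ℂ} {x : ℂ} (hS : Collinear ℝ S)
    (hx : ¬Collinear ℝ (S ∪ {x})) :
    ∃ a b : ℂ, (∀ p ∈ S, p + b * conj p = a) ∧ x + b * conj x ≠ a := by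
  obtain ⟨p₀, v, hv⟩ := (collinear_iff_exists_forall_eq_smul_vadd S).1 hS
  have hv₀ : v ≠ 0 := by
    rintro rfl
    refine hx ((collinear_pair ℝ p₀ x).subset ?_)
    rintro p (hp | rfl)
    · obtain ⟨r, rfl⟩ := hv p hp
      simp
    · simp
  have hcv₀ : conj v ≠ 0 := by simpa using hv₀
  refine ⟨p₀ - v / conj v * conj p₀, -v / conj v, ?_, fun hxS => hx ?_⟩
  · intro p hp
    obtain ⟨r, rfl⟩ := hv p hp
    simp only [vadd_eq_add, Complex.real_smul, map_add, map_mul, Complex.conj_ofReal]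
    field_simp
    ring
  · have hw : conj ((x - p₀) / v) = (x - p₀) / v := by
      rw [map_div₀, div_eq_div_iff hcv₀ hv₀, map_sub]
      field_simp at hxS
      linear_combination -hxS
    rw [collinear_iff_exists_forall_eq_smul_vadd]
    refine ⟨p₀, v, ?_⟩
    rintro p (hp | hp)
    · exact hv p hp
    · rw [Set.mem_singleton_iff.1 hp]
      refine ⟨((x - p₀) / v).re, ?_⟩
      rw [vadd_eq_add, Complex.real_smul, Complex.conj_eq_iff_re.1 hw, div_mul_cancel₀ _ hv₀]
      ring

theorem swapsUpToScalar_M {p z₁ z₂ : ℂ} (hp : p + z₁ * z₂ * conj p = z₁ + z₂) :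
    SwapsUpToScalar ![z₁, 1] ![z₂, 1] (M p) :=
  ⟨conj p * z₁ - 1, conj p * z₂ - 1, M_mulVec_of_add_mul_conj_eq hp,
    M_mulVec_of_add_mul_conj_eq (by linear_combination hp),
    by rw [det_M]; linear_combination conj p * hp⟩

theorem porism_cyclic_polygons_general (l : List ℂ)
    (heven : Even l.length)
    (hcol : Collinear ℝ ({z : ℂ | z ∈ l} : Set ℂ))
    (hnc : ∀ z ∈ l, ‖z‖ ≠ 1)
    (N : Matrix (Fin 2) (Fin 2) ℂ)
    (hN : N = (l.map M).prod)
    (x : ℂ) (hx : ‖x‖ = 1)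
    (hxcol : ¬ Collinear ℝ (({z : ℂ | z ∈ l} ∪ {x}) : Set ℂ))
    (hfix : N 0 0 * x + N 0 1 = x * (N 1 0 * x + N 1 1)) :
    (∃ l' : ℂ, l' ≠ 0 ∧ N = l' • (1 : Matrix (Fin 2) (Fin 2) ℂ)) ∧
    ∀ z : ℂ, ‖z‖ = 1 → N 0 0 * z + N 0 1 = z * (N 1 0 * z + N 1 1) := by
  obtain ⟨a, b, hline, hxline⟩ := hcol.exists_add_mul_conj_eq hxcol
  obtain ⟨z₁, z₂, rfl, rfl⟩ := IsAlgClosed.exists_add_eq_mul_eq a b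
  have hxz₁ : x ≠ z₁ := ne_of_norm_eq_one_of_add_mul_conj_ne hx hxline
  have hxz₂ : x ≠ z₂ := ne_of_norm_eq_one_of_add_mul_conj_ne (z₂ := z₁) hx
    (by rwa [mul_comm z₂, add_comm z₂])
  obtain ⟨K₁, K₂, hK₁, hK₂, hdetK⟩ : FixesUpToScalar ![z₁, 1] ![z₂, 1] N := by
    rw [hN]
    refine fixesUpToScalar_prod_of_even _ (by simpa using heven) ?_
    simpa using fun p hp => swapsUpToScalar_M (hline p hp)
  have hdet : N.det ≠ 0 := by
    rw [← isUnit_iff_ne_zero, ← isUnit_iff_isUnit_det, hN]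
    exact List.prod_isUnit (by simpa using fun p hp => isUnit_M (hnc p hp))
  set μ := N 1 0 * x + N 1 1
  have hμ : N *ᵥ ![x, 1] = μ • ![x, 1] :=
    mulVec_vecCons_one_eq_smul_iff.2 ⟨by rw [hfix, mul_comm], rfl⟩
  have hμK₁ : μ = K₁ := by
    have hK₂₀ : K₂ ≠ 0 := right_ne_zero_of_mul (hdetK ▸ hdet)
    exact mul_right_cancel₀ hK₂₀ (hdetK ▸ det_eq_mul_of_mulVec_eq_smul hxz₂ hμ hK₂).symm
  have hNμ : N = μ • 1 := eq_smul_one_of_mulVec_eq_smul hxz₁ hμ (hμK₁ ▸ hK₁)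
  refine ⟨⟨μ, fun hμ₀ => hdet (by simp [hNμ, hμ₀]), hNμ⟩, fun z _ => ?_⟩
  rw [hNμ]
  simp [mul_comm]

/-- Porism for cyclic `2n`-gons (paper's Theorem 4.1): let `l` be a list of an even
number of collinear points, none on the unit circle, and `N` the product of the
corresponding reversion matrices.  If the Möbius transformation of `N` fixes some
point `x` of the unit circle not collinear with the points of `l` (with nonvanishing
denominator at `x`), then `N` is a nonzero scalar multiple of the identity and hence
its Möbius transformation fixes every point of the unit circle. -/
theorem porism_cyclic_polygons (l : List ℂ)
    (heven : Even l.length)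
    (hcol : Collinear ℝ ({z : ℂ | z ∈ l} : Set ℂ))
    (hnc : ∀ z ∈ l, ‖z‖ ≠ 1)
    (N : Matrix (Fin 2) (Fin 2) ℂ)
    (hN : N = (l.map M).prod)
    (x : ℂ) (hx : ‖x‖ = 1)
    (hxcol : ¬ Collinear ℝ (({z : ℂ | z ∈ l} ∪ {x}) : Set ℂ))
    (hden : N 1 0 * x + N 1 1 ≠ 0)
    (hfix : N 0 0 * x + N 0 1 = x * (N 1 0 * x + N 1 1)) :
    (∃ l' : ℂ, l' ≠ 0 ∧ N = l' • (1 : Matrix (Fin 2) (Fin 2) ℂ)) ∧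
    ∀ z : ℂ, ‖z‖ = 1 → N 0 0 * z + N 0 1 = z * (N 1 0 * z + N 1 1) :=
  porism_cyclic_polygons_general l heven hcol hnc N hN x hx hxcol hfix
end

section
/- Let a, b ∈ ℝ with 1 + a·b ≠ 0. Then, in 2×2 complex matrices, M(b) * M(0) * M(a) = (1 + a·b) • M((a + b)/(1 + a·b)) where a, b and (a+b)/(1+ab) are regarded as complex numbers. Hence the composition of the reversions of the unit circle through the real points a, 0, b (in this order) equals the reversion through the real point (a + b)/(1 + a·b), the relativistic sum of the velocities a and b. -/
open Matrix

open ComplexConjugate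

theorem M_mul_M_zero_mul_M (p q : ℂ) :
    M q * M 0 * M p = !![1 + q * conj p, -(p + q); conj p + conj q, -(1 + conj q * p)] := by
  simp only [M, map_zero, neg_zero, mul_fin_two]
  ring_nf

theorem smul_M (c p : ℂ) : c • M p = !![c, -(c * p); c * conj p, -c] := by
  simp only [M, smul_of, smul_cons, smul_eq_mul, mul_one, mul_neg, smul_empty]

/-- When `p` and `q` lie on a common line through `0`, the scalar `1 + q * conj p` is real, so it
can also be pulled out of the lower-left entry `conj p + conj q`. -/
theorem M_mul_M_zero_mul_M_eq_smul {p q : ℂ} (hreal : conj q * p = q * conj p)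
    (hne : 1 + q * conj p ≠ 0) :
    M q * M 0 * M p = (1 + q * conj p) • M ((p + q) / (1 + q * conj p)) := by
  have hconj : conj (1 + q * conj p) = 1 + q * conj p := by
    rw [map_add, map_one, map_mul, Complex.conj_conj, mul_comm, ← hreal, mul_comm]
  rw [M_mul_M_zero_mul_M, smul_M, map_div₀, hconj, mul_div_cancel₀ _ hne, mul_div_cancel₀ _ hne,
    hreal, map_add]

/-- Relativistic addition of velocities (paper's Section 5): for real `a, b` with
`1 + a*b ≠ 0`, the composition of the reversions of the unit circle through the
real points `a`, `0`, `b` (in this order) equals, up to the scalar `1 + a*b`,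
the reversion through the relativistic sum `(a + b)/(1 + a*b)`. -/
theorem relativistic_velocity_addition (a b : ℝ) (h : 1 + a * b ≠ 0) :
    M (b : ℂ) * M (0 : ℂ) * M (a : ℂ)
      = ((1 + a * b : ℝ) : ℂ) • M (((a + b) / (1 + a * b) : ℝ) : ℂ) := by
  have hne : 1 + (b : ℂ) * conj (a : ℂ) ≠ 0 := by
    rw [Complex.conj_ofReal, mul_comm]; exact_mod_cast h
  rw [M_mul_M_zero_mul_M_eq_smul (by simp only [Complex.conj_ofReal, mul_comm]) hne]
  push_cast
  rw [Complex.conj_ofReal, mul_comm (b : ℂ)]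
end

section
/- Let p, q, r, s ∈ ℂ and suppose M(q) * M(p) = λ • (M(r) * M(s)) for some λ ∈ ℂ, λ ≠ 0. If 1 − q·conj(p) ≠ 0, then 1 − r·conj(s) ≠ 0 and (q − p)/(1 − q·conj(p)) = (r − s)/(1 − r·conj(s)). -/
open Matrix

open ComplexConjugate

theorem M_mul_M (p q : ℂ) :
    M q * M p = !![1 - q * conj p, q - p; conj q - conj p, 1 - conj q * p] := by
  ext i j
  fin_cases i <;> fin_cases j <;> simp [M, mul_apply, Fin.sum_univ_two] <;> ring

theorem ne_zero_and_div_eq_div_of_eq_mul {K : Type*} [Field K] {a b c d lam : K}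
    (ha : a = lam * b) (hc : c = lam * d) (ha0 : a ≠ 0) : b ≠ 0 ∧ c / a = d / b := by
  have hlam : lam ≠ 0 := left_ne_zero_of_mul (ha ▸ ha0)
  have hb : b ≠ 0 := right_ne_zero_of_mul (ha ▸ ha0)
  refine ⟨hb, ?_⟩
  rw [ha, hc, mul_div_mul_left _ _ hlam]

theorem conjugate_pairs_formula_general (p q r s : ℂ) (lam : ℂ)
    (h : M q * M p = lam • (M r * M s))
    (hqp : 1 - q * (starRingEnd ℂ) p ≠ 0) :
    1 - r * (starRingEnd ℂ) s ≠ 0 ∧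
    (q - p) / (1 - q * (starRingEnd ℂ) p) = (r - s) / (1 - r * (starRingEnd ℂ) s) := by
  rw [M_mul_M, M_mul_M] at h
  have h00 : 1 - q * conj p = lam * (1 - r * conj s) := by
    simpa using congrFun (congrFun h 0) 0
  have h01 : q - p = lam * (r - s) := by
    simpa using congrFun (congrFun h 0) 1
  exact ne_zero_and_div_eq_div_of_eq_mul h00 h01 hqp

/-- If `M(q) * M(p)` and `M(r) * M(s)` agree up to a nonzero scalar (i.e. the pairs
`(p,q)` and `(r,s)` are conjugate with respect to the circle), and `1 - q * conj p ≠ 0`,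
then `1 - r * conj s ≠ 0` and `(q - p)/(1 - q * conj p) = (r - s)/(1 - r * conj s)`. -/
theorem conjugate_pairs_formula (p q r s : ℂ) (lam : ℂ) (hlam : lam ≠ 0)
    (h : M q * M p = lam • (M r * M s))
    (hqp : 1 - q * (starRingEnd ℂ) p ≠ 0) :
    1 - r * (starRingEnd ℂ) s ≠ 0 ∧
    (q - p) / (1 - q * (starRingEnd ℂ) p) = (r - s) / (1 - r * (starRingEnd ℂ) s) :=
  conjugate_pairs_formula_general p q r s lam h hqp
end

section
/- Let (x, y), (a, b) ∈ ℝ × ℝ with x² − y² = 1. Set d₁ = a·x − b·y − 1, d₂ = a·y − b·x, D = d₁² − d₂², and assume D ≠ 0. Define x' = ((x − a)·d₁ − (y − b)·d₂)/D and y' = ((y − b)·d₁ − (x − a)·d₂)/D. Then x'² − y'² = 1, and the three points (x, y), (a, b), (x', y') of ℝ² are collinear (Collinear ℝ ({(x,y), (a,b), (x',y')} : Set (ℝ × ℝ))). -/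
/-!
In split-complex terms, with `z = (x, y)`, `p = (a, b)`, `w = p* z - 1 = (d₁, d₂)` and `N` the
split-complex norm, the image point is `z' = (z - p) w* / N w` and `D = N w`. On the hyperbola
`N z = 1` one has `z w* = p - z`, whence `N (z - p) = N w` and `z' = p + (N p - 1) / D • (z - p)`.
The first identity and multiplicativity of `N` give `N z' = N (z - p) N w / D² = 1`; the second
exhibits `z'` on the line through `p` and `z`.
-/

section SplitComplexIdentities

variable {R : Type*} [CommRing R]

theorem sq_sub_sq_mul_sq_sub_sq (u v c d : R) :
    (u ^ 2 - v ^ 2) * (c ^ 2 - d ^ 2) = (u * c - v * d) ^ 2 - (v * c - u * d) ^ 2 := by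
  ring

variable {x y : R}

theorem sub_sq_sub_sub_sq_of_sq_sub_sq_eq_one (hxy : x ^ 2 - y ^ 2 = 1) (a b : R) :
    (x - a) ^ 2 - (y - b) ^ 2 = (a * x - b * y - 1) ^ 2 - (a * y - b * x) ^ 2 := by
  linear_combination (1 + b ^ 2 - a ^ 2) * hxy

theorem reversion_numerator_fst_of_sq_sub_sq_eq_one (hxy : x ^ 2 - y ^ 2 = 1) (a b : R) :
    (x - a) * (a * x - b * y - 1) - (y - b) * (a * y - b * x) =
      (a ^ 2 - b ^ 2 - 1) * (x - a) + a * ((a * x - b * y - 1) ^ 2 - (a * y - b * x) ^ 2) := by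
  linear_combination (a - a ^ 3 + a * b ^ 2) * hxy

theorem reversion_numerator_snd_of_sq_sub_sq_eq_one (hxy : x ^ 2 - y ^ 2 = 1) (a b : R) :
    (y - b) * (a * x - b * y - 1) - (x - a) * (a * y - b * x) =
      (a ^ 2 - b ^ 2 - 1) * (y - b) + b * ((a * x - b * y - 1) ^ 2 - (a * y - b * x) ^ 2) := by
  linear_combination (b - a ^ 2 * b + b ^ 3) * hxy

end SplitComplexIdentities

theorem collinear_insert_insert_lineMap {k V P : Type*} [DivisionRing k] [AddCommGroup V]
    [Module k V] [AddTorsor V P] (p q : P) (r : k) :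
    Collinear k ({q, p, AffineMap.lineMap p q r} : Set P) := by
  rw [Set.insert_comm, Set.pair_comm, Set.insert_comm]
  exact collinear_insert_of_mem_affineSpan_pair (AffineMap.lineMap_mem_affineSpan_pair r p q)

/-- Paper's Proposition 6.1, branch `x² - y² = 1`, in real coordinates: the
split-complex reversion of the hyperbola through the point `(a, b)` preserves the
hyperbola, and the image point is collinear with `(x, y)` and `(a, b)`. -/
theorem hyperbola_reversion_pos_branch (x y a b : ℝ)
    (hxy : x ^ 2 - y ^ 2 = 1)
    (d₁ d₂ D : ℝ)
    (hd₁ : d₁ = a * x - b * y - 1)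
    (hd₂ : d₂ = a * y - b * x)
    (hD : D = d₁ ^ 2 - d₂ ^ 2)
    (hD0 : D ≠ 0)
    (x' y' : ℝ)
    (hx' : x' = ((x - a) * d₁ - (y - b) * d₂) / D)
    (hy' : y' = ((y - b) * d₁ - (x - a) * d₂) / D) :
    x' ^ 2 - y' ^ 2 = 1 ∧
    Collinear ℝ ({(x, y), (a, b), (x', y')} : Set (ℝ × ℝ)) := by
  subst hd₁ hd₂
  have hnorm : (x - a) ^ 2 - (y - b) ^ 2 = D := by
    rw [hD, sub_sq_sub_sub_sq_of_sq_sub_sq_eq_one hxy]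
  constructor
  · rw [hx', hy', div_pow, div_pow, ← sub_div, ← sq_sub_sq_mul_sq_sub_sq, hnorm, ← hD,
      ← sq, div_self (pow_ne_zero 2 hD0)]
  · have hline : (x', y') = AffineMap.lineMap (a, b) (x, y) ((a ^ 2 - b ^ 2 - 1) / D) := by
      rw [AffineMap.lineMap_apply_module', hx', hy',
        reversion_numerator_fst_of_sq_sub_sq_eq_one hxy,
        reversion_numerator_snd_of_sq_sub_sq_eq_one hxy, ← hD]
      ext <;> simp only [Prod.smul_mk, Prod.mk_sub_mk, Prod.mk_add_mk, smul_eq_mul] <;>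
        field_simp
    rw [hline]
    exact collinear_insert_insert_lineMap _ _ _
end

section
/- Let (x, y), (a, b) ∈ ℝ × ℝ with x² − y² = −1. Set d₁ = a·x − b·y + 1, d₂ = a·y − b·x, D = d₁² − d₂², and assume D ≠ 0. Define x' = ((a − x)·d₁ − (b − y)·d₂)/D and y' = ((b − y)·d₁ − (a − x)·d₂)/D. Then x'² − y'² = −1, and the three points (x, y), (a, b), (x', y') of ℝ² are collinear (Collinear ℝ ({(x,y), (a,b), (x',y')} : Set (ℝ × ℝ))). -/
/-!
The reversion through `p = (a, b)` sends `z = (x, y)` to the second point where the line through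
`z` and `p` meets the hyperbola: with `t = 2 d₁ / D` one has `z' = z + t (p - z)`.
Along that line `x² - y²` is the quadratic `-1 + 2 t B + t² Q` in `t`, where `Q = -D` is the
value of `x² - y²` at `p - z` (in split-complex terms `p* z + 1 = z (p - z)*` and `z z* = -1`)
and `B = x (a - x) - y (b - y)` equals `d₁` on the branch, so it takes the value `-1` again at `t = -2 B / Q`.
-/

theorem add_mul_sq_sub_add_mul_sq_of_mul_eq {R : Type*} [CommRing R] {x y u v t c : R}
    (h : x ^ 2 - y ^ 2 = c) (ht : t * (u ^ 2 - v ^ 2) = -2 * (x * u - y * v)) :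
    (x + t * u) ^ 2 - (y + t * v) ^ 2 = c := by
  linear_combination h + t * ht

theorem collinear_add_mul_sub {k : Type*} [Field k] (x y a b t : k) :
    Collinear k ({(x, y), (a, b), (x + t * (a - x), y + t * (b - y))} : Set (k × k)) := by
  have hline : (x + t * (a - x), y + t * (b - y)) = t • ((a, b) -ᵥ (x, y)) +ᵥ (x, y) := by
    ext <;> simp only [vsub_eq_sub, vadd_eq_add, Prod.fst_add, Prod.snd_add, Prod.smul_fst,
      Prod.smul_snd, Prod.fst_sub, Prod.snd_sub, smul_eq_mul] <;> ring
  rw [hline]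
  exact collinear_triple_of_mem_affineSpan_pair (left_mem_affineSpan_pair _ _ _)
    (right_mem_affineSpan_pair _ _ _) (smul_vsub_vadd_mem_affineSpan_pair _ _ _)

theorem sub_sq_sub_sub_sq_eq_neg {R : Type*} [CommRing R] {x y a b : R}
    (hxy : x ^ 2 - y ^ 2 = -1) :
    (a - x) ^ 2 - (b - y) ^ 2 = -((a * x - b * y + 1) ^ 2 - (a * y - b * x) ^ 2) := by
  linear_combination (a ^ 2 - b ^ 2 + 1) * hxy

section Reversion

variable {k : Type*} [Field k] {x y a b d₁ d₂ D : k}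

theorem reversion_fst_eq (hxy : x ^ 2 - y ^ 2 = -1) (hd₁ : d₁ = a * x - b * y + 1)
    (hd₂ : d₂ = a * y - b * x) (hD : D = d₁ ^ 2 - d₂ ^ 2) (hD0 : D ≠ 0) :
    ((a - x) * d₁ - (b - y) * d₂) / D = x + 2 * d₁ / D * (a - x) := by
  field_simp
  subst hd₁ hd₂ hD
  linear_combination -(a + x * (a ^ 2 - b ^ 2)) * hxy

theorem reversion_snd_eq (hxy : x ^ 2 - y ^ 2 = -1) (hd₁ : d₁ = a * x - b * y + 1)
    (hd₂ : d₂ = a * y - b * x) (hD : D = d₁ ^ 2 - d₂ ^ 2) (hD0 : D ≠ 0) :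
    ((b - y) * d₁ - (a - x) * d₂) / D = y + 2 * d₁ / D * (b - y) := by
  field_simp
  subst hd₁ hd₂ hD
  linear_combination -(b + y * (a ^ 2 - b ^ 2)) * hxy

end Reversion

/-- Paper's Proposition 6.1, branch `x² - y² = -1`, in real coordinates: the
split-complex reversion of this branch through the point `(a, b)` preserves the
branch, and the image point is collinear with `(x, y)` and `(a, b)`. -/
theorem hyperbola_reversion_neg_branch (x y a b : ℝ)
    (hxy : x ^ 2 - y ^ 2 = -1)
    (d₁ d₂ D : ℝ)
    (hd₁ : d₁ = a * x - b * y + 1)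
    (hd₂ : d₂ = a * y - b * x)
    (hD : D = d₁ ^ 2 - d₂ ^ 2)
    (hD0 : D ≠ 0)
    (x' y' : ℝ)
    (hx' : x' = ((a - x) * d₁ - (b - y) * d₂) / D)
    (hy' : y' = ((b - y) * d₁ - (a - x) * d₂) / D) :
    x' ^ 2 - y' ^ 2 = -1 ∧
    Collinear ℝ ({(x, y), (a, b), (x', y')} : Set (ℝ × ℝ)) := by
  set t := 2 * d₁ / D with ht_def
  have hnorm : (a - x) ^ 2 - (b - y) ^ 2 = -D := by
    rw [hD, hd₁, hd₂]
    exact sub_sq_sub_sub_sq_eq_neg hxy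
  have ht : t * ((a - x) ^ 2 - (b - y) ^ 2) = -2 * (x * (a - x) - y * (b - y)) := by
    rw [hnorm, ht_def, hd₁]
    field_simp
    linear_combination -hxy
  rw [hx', hy', reversion_fst_eq hxy hd₁ hd₂ hD hD0, reversion_snd_eq hxy hd₁ hd₂ hD hD0]
  exact ⟨add_mul_sq_sub_add_mul_sq_of_mul_eq hxy ht, collinear_add_mul_sub x y a b t⟩
end

section
/- For a point P = (A, B) ∈ ℝ², define the hyperbola reversion ρ_P(x, y) = (((x − A)·d₁ − (y − B)·d₂)/D, ((y − B)·d₁ − (x − A)·d₂)/D) where d₁ = A·x − B·y − 1, d₂ = A·y − B·x, D = d₁² − d₂². Let a, b ∈ ℝ with 1 − a·b ≠ 0, and set s = (a + b)/(1 − a·b). Then for every (x, y) ∈ ℝ² with x² − y² = 1, provided the quantity D is nonzero at each of the three successive applications and for the reversion through (0, s), one has ρ_{(0,b)}(ρ_{(0,0)}(ρ_{(0,a)}(x, y))) = ρ_{(0,s)}(x, y). That is, composing the hyperbola reversions through the collinear points (0,a), (0,0), (0,b) equals the reversion through (0, (a+b)/(1−ab)). -/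
/-- The split-complex norm of the denominator appearing in the hyperbola reversion
through `P = (A, B)` evaluated at `Z = (x, y)`:
`D = d₁² - d₂²` with `d₁ = A*x - B*y - 1`, `d₂ = A*y - B*x`. -/
def revDen (P Z : ℝ × ℝ) : ℝ :=
  (P.1 * Z.1 - P.2 * Z.2 - 1) ^ 2 - (P.1 * Z.2 - P.2 * Z.1) ^ 2

/-- The reversion of the hyperbola `x² - y² = 1` through the point `P = (A, B)`,
in coordinates: `ρ_P(x, y) = (((x - A)d₁ - (y - B)d₂)/D, ((y - B)d₁ - (x - A)d₂)/D)`
where `d₁ = A*x - B*y - 1`, `d₂ = A*y - B*x`, `D = d₁² - d₂²`. -/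
noncomputable def rho (P Z : ℝ × ℝ) : ℝ × ℝ :=
  (((Z.1 - P.1) * (P.1 * Z.1 - P.2 * Z.2 - 1) - (Z.2 - P.2) * (P.1 * Z.2 - P.2 * Z.1)) /
      revDen P Z,
   ((Z.2 - P.2) * (P.1 * Z.1 - P.2 * Z.2 - 1) - (Z.1 - P.1) * (P.1 * Z.2 - P.2 * Z.1)) /
      revDen P Z)

/-!
In the idempotent (light-cone) coordinates `u = x + y`, `v = x - y` the hyperbolic numbers split
as the product ring `ℝ × ℝ`, so the reversion `(z - p)(p* z - 1)⁻¹` acts coordinatewise by real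
Möbius maps. For a point `(0, c)` these are `u ↦ (c - u)/(1 + c u)` and the same with `-c` on `v`,
i.e. `tan θ ↦ tan (γ - θ)` for `c = tan γ`. Composing with the point reflection `ρ_(0,0)` turns
the three reversions into `tan θ ↦ tan (γ_a + γ_b - θ)`, which is the reversion through
`(0, tan (γ_a + γ_b))`, and the tangent addition formula identifies that point with `(0, s)`.
-/

def lightCone (Z : ℝ × ℝ) : ℝ × ℝ := (Z.1 + Z.2, Z.1 - Z.2)

lemma lightCone_injective : Function.Injective lightCone := by
  intro Z W h
  simp only [lightCone, Prod.mk.injEq] at h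
  ext <;> linarith [h.1, h.2]

lemma lightCone_neg (Z : ℝ × ℝ) : lightCone (-Z) = -lightCone Z := by
  ext <;> simp [lightCone] <;> ring

lemma revDen_eq_mul (P Z : ℝ × ℝ) :
    revDen P Z =
      ((lightCone P).2 * (lightCone Z).1 - 1) * ((lightCone P).1 * (lightCone Z).2 - 1) := by
  simp only [revDen, lightCone]; ring

lemma lightCone_rho (P Z : ℝ × ℝ) (h : revDen P Z ≠ 0) :
    lightCone (rho P Z) =
      (((lightCone Z).1 - (lightCone P).1) / ((lightCone P).2 * (lightCone Z).1 - 1),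
       ((lightCone Z).2 - (lightCone P).2) / ((lightCone P).1 * (lightCone Z).2 - 1)) := by
  rw [revDen_eq_mul, mul_ne_zero_iff] at h
  obtain ⟨hu, hv⟩ := h
  simp only [lightCone, rho, revDen_eq_mul] at hu hv ⊢
  ext <;> field_simp <;> ring

lemma rho_origin (Z : ℝ × ℝ) : rho (0, 0) Z = -Z := by
  ext <;> simp [rho, revDen]

noncomputable def tanSub (c u : ℝ) : ℝ := (c - u) / (1 + c * u)

lemma revDen_axis (c : ℝ) (Z : ℝ × ℝ) :
    revDen (0, c) Z = (1 + c * (lightCone Z).1) * (1 + -c * (lightCone Z).2) := by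
  rw [revDen_eq_mul]; simp only [lightCone]; ring

lemma lightCone_rho_axis (c : ℝ) (Z : ℝ × ℝ) (h : revDen (0, c) Z ≠ 0) :
    lightCone (rho (0, c) Z) = (tanSub c (lightCone Z).1, tanSub (-c) (lightCone Z).2) := by
  rw [lightCone_rho _ _ h, tanSub, tanSub, ← neg_div_neg_eq, ← neg_div_neg_eq (_ - _)]
  simp only [lightCone]
  congr 2 <;> ring

lemma tanSub_neg_tanSub {a b u : ℝ} (hab : 1 - a * b ≠ 0) (hu : 1 + a * u ≠ 0) :
    tanSub b (-tanSub a u) = tanSub ((a + b) / (1 - a * b)) u := by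
  calc tanSub b (-tanSub a u)
      = (a + b - (1 - a * b) * u) / (1 - a * b + (a + b) * u) := by
        refine (mul_div_mul_left _ _ hu).symm.trans ?_
        unfold tanSub
        congr 1 <;> field_simp <;> ring
    _ = tanSub ((a + b) / (1 - a * b)) u := by
        refine Eq.trans ?_ (mul_div_mul_left _ _ hab)
        congr 1 <;> field_simp

/-- Trigonometric tangent addition via hyperbola reversions (paper's Section 6):
for real `a, b` with `1 - a*b ≠ 0` and `s = (a + b)/(1 - a*b)`, composing the
hyperbola reversions through the collinear points `(0, a)`, `(0, 0)`, `(0, b)`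
equals the reversion through `(0, s)`, at every point of the hyperbola where all
the relevant denominators are nonzero. -/
theorem tangent_addition_porism (a b s : ℝ)
    (hab : 1 - a * b ≠ 0)
    (hs : s = (a + b) / (1 - a * b)) :
    ∀ x y : ℝ, x ^ 2 - y ^ 2 = 1 →
      revDen (0, a) (x, y) ≠ 0 →
      revDen (0, 0) (rho (0, a) (x, y)) ≠ 0 →
      revDen (0, b) (rho (0, 0) (rho (0, a) (x, y))) ≠ 0 →
      revDen (0, s) (x, y) ≠ 0 →
      rho (0, b) (rho (0, 0) (rho (0, a) (x, y))) = rho (0, s) (x, y) := by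
  intro x y _ ha _ hb hs'
  rw [rho_origin] at hb ⊢
  apply lightCone_injective
  rw [lightCone_rho_axis b _ hb, lightCone_neg, lightCone_rho_axis a _ ha,
    lightCone_rho_axis s _ hs']
  rw [revDen_axis, mul_ne_zero_iff] at ha
  have hab' : 1 - -a * -b ≠ 0 := by rwa [neg_mul_neg]
  have hs_neg : -s = (-a + -b) / (1 - -a * -b) := by rw [hs, neg_mul_neg, ← neg_add, neg_div]
  simp only [Prod.neg_mk]
  rw [tanSub_neg_tanSub hab ha.1, tanSub_neg_tanSub hab' ha.2, ← hs_neg, hs]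
end
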